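/- For every finite simple graph G = (V,E) with vertex set partitioned into token sets P_1,…,P_k, all dominating sets D_init, D_fin of G containing exactly one vertex of each P_i, and every integer ℓ ≥ 0: G admits a partitioned TJ-reconfiguration sequence of dominating sets of length ℓ from D_init to D_fin (with respect to P_1,…,P_k) if and only if the graph G' obtained from G by adding, for each i, two new vertices gar_i and gar'_i each adjacent to exactly the vertices of P_i, admits an (unpartitioned) TJ-reconfiguration sequence of dominating sets of length ℓ from D_init to D_fin (all sets of size k). -/
import Mathlib


/-- `I` is an independent set of the graph `G`. -/
def IsIndepFinset {α : Type*} (G : SimpleGraph α) (I : Finset α) : Prop :=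
  ∀ u ∈ I, ∀ v ∈ I, ¬ G.Adj u v

/-- `D` is a dominating set of the graph `G`. -/
def IsDomFinset {α : Type*} (G : SimpleGraph α) (D : Finset α) : Prop :=
  ∀ x : α, x ∈ D ∨ ∃ y ∈ D, G.Adj x y

/-- A token-jumping step: some token jumps from `u ∈ I` to `w ∉ I`. -/
def TJStep {α : Type*} [DecidableEq α] (I J : Finset α) : Prop :=
  ∃ u ∈ I, ∃ w, w ∉ I ∧ J = insert w (I.erase u)

/-- A token-sliding step: some token slides from `u ∈ I` along an edge to `w ∉ I`. -/
def TSStep {α : Type*} [DecidableEq α] (G : SimpleGraph α) (I J : Finset α) : Prop :=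
  ∃ u ∈ I, ∃ w, w ∉ I ∧ G.Adj u w ∧ J = insert w (I.erase u)

/-- A partitioned token-jumping step with respect to token sets `Q`. -/
def PTJStep {α : Type*} {ι : Type*} [DecidableEq α] (Q : ι → Set α) (I J : Finset α) : Prop :=
  ∃ u ∈ I, ∃ w, w ∉ I ∧ (∃ i, u ∈ Q i ∧ w ∈ Q i) ∧ J = insert w (I.erase u)

/-- A partitioned token-sliding step with respect to token sets `Q`. -/
def PTSStep {α : Type*} {ι : Type*} [DecidableEq α] (G : SimpleGraph α) (Q : ι → Set α)
    (I J : Finset α) : Prop :=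
  ∃ u ∈ I, ∃ w, w ∉ I ∧ G.Adj u w ∧ (∃ i, u ∈ Q i ∧ w ∈ Q i) ∧ J = insert w (I.erase u)

/-- There is a reconfiguration sequence `A = f 0, f 1, …, f ℓ = B` of length `ℓ`, all of whose
members satisfy `Valid`, with consecutive members related by `Step`. -/
def AdmitsSeq {α : Type*} (Valid : Finset α → Prop) (Step : Finset α → Finset α → Prop)
    (A B : Finset α) (ℓ : ℕ) : Prop :=
  ∃ f : ℕ → Finset α, f 0 = A ∧ f ℓ = B ∧ (∀ i, i ≤ ℓ → Valid (f i)) ∧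
    ∀ i, i < ℓ → Step (f i) (f (i + 1))

/-- Vertices of the graph `G'`: the vertices of `G` together with new vertices `gar_i` and
`gar'_i` for each `i ∈ {1,…,k}`. -/
inductive GVseven (V : Type*) (k : ℕ) : Type _ where
  | orig : V → GVseven V k
  | gar : Fin k → GVseven V k
  | gar' : Fin k → GVseven V k
deriving DecidableEq

/-- The edges of `G'`: the edges of `G`, plus `gar_i` and `gar'_i` adjacent to exactly the
vertices of `P_i`. -/
def relSeven {V : Type*} (G : SimpleGraph V) {k : ℕ} (P : Fin k → Finset V) :
    GVseven V k → GVseven V k → Prop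
  | .orig v, .orig w => G.Adj v w
  | .gar i, .orig v => v ∈ P i
  | .gar' i, .orig v => v ∈ P i
  | _, _ => False

/-- The graph `G'` obtained from `G` by adding the guard vertices. -/
def GpSeven {V : Type*} (G : SimpleGraph V) {k : ℕ} (P : Fin k → Finset V) :
    SimpleGraph (GVseven V k) :=
  SimpleGraph.fromRel (relSeven G P)

section Aux

variable {V : Type*} [DecidableEq V] {k : ℕ}

lemma orig_inj : Function.Injective (GVseven.orig : V → GVseven V k) :=
  fun a b h => by simpa using h

lemma adj_orig_orig (G : SimpleGraph V) (P : Fin k → Finset V) (v w : V) :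
    (GpSeven G P).Adj (.orig v) (.orig w) ↔ G.Adj v w := by
  rw [GpSeven, SimpleGraph.fromRel_adj]
  constructor
  · rintro ⟨-, h | h⟩
    · exact h
    · exact h.symm
  · intro h
    exact ⟨by simpa using h.ne, Or.inl h⟩

lemma adj_gar (G : SimpleGraph V) (P : Fin k → Finset V) (i : Fin k) (y : GVseven V k) :
    (GpSeven G P).Adj (.gar i) y ↔ ∃ v ∈ P i, y = .orig v := by
  rw [GpSeven, SimpleGraph.fromRel_adj]
  cases y <;> simp [relSeven] <;> tauto

lemma adj_gar' (G : SimpleGraph V) (P : Fin k → Finset V) (i : Fin k) (y : GVseven V k) :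
    (GpSeven G P).Adj (.gar' i) y ↔ ∃ v ∈ P i, y = .orig v := by
  rw [GpSeven, SimpleGraph.fromRel_adj]
  cases y <;> simp [relSeven] <;> tauto

/-- Which block (original-in-`P i`, or guard with index `i`) a vertex of `G'` belongs to. -/
def inPart (P : Fin k → Finset V) (i : Fin k) : GVseven V k → Prop
  | .orig v => v ∈ P i
  | .gar j => j = i
  | .gar' j => j = i

instance (P : Fin k → Finset V) (i : Fin k) : DecidablePred (inPart P i)
  | .orig v => inferInstanceAs (Decidable (v ∈ P i))
  | .gar j => inferInstanceAs (Decidable (j = i))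
  | .gar' j => inferInstanceAs (Decidable (j = i))

/-- Structure of dominating sets of `G'` of size `k`: they consist of original vertices only,
one from each part. -/
lemma structA [Fintype V] (G : SimpleGraph V) (P : Fin k → Finset V)
    (hP : ∀ v : V, ∃! i, v ∈ P i) (D' : Finset (GVseven V k))
    (hdom : IsDomFinset (GpSeven G P) D') (hcard : D'.card = k) :
    ∃ D : Finset V, D' = D.image .orig ∧ IsDomFinset G D ∧ D.card = k ∧
      (∀ i, ∃! v, v ∈ D ∧ v ∈ P i) := by
  classical
  set h : Fin k → Finset (GVseven V k) := fun i => D'.filter (inPart P i) with hh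
  have hdisj : ∀ i ∈ (Finset.univ : Finset (Fin k)), ∀ j ∈ Finset.univ, i ≠ j →
      Disjoint (h i) (h j) := by
    intro i _ j _ hij
    rw [Finset.disjoint_left]
    intro x hx hx'
    rw [hh, Finset.mem_filter] at hx hx'
    apply hij
    cases x with
    | orig v => exact ((hP v).unique hx.2 hx'.2)
    | gar m => exact hx.2.symm.trans hx'.2
    | gar' m => exact hx.2.symm.trans hx'.2
  have hcover : D' = Finset.univ.biUnion h := by
    ext x
    simp only [Finset.mem_biUnion, Finset.mem_univ, true_and, hh, Finset.mem_filter]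
    constructor
    · intro hx
      cases x with
      | orig v => obtain ⟨i, hi, -⟩ := hP v; exact ⟨i, hx, hi⟩
      | gar m => exact ⟨m, hx, rfl⟩
      | gar' m => exact ⟨m, hx, rfl⟩
    · rintro ⟨i, hx, -⟩; exact hx
  have hsum : ∑ i, (h i).card = k := by
    rw [← Finset.card_biUnion hdisj, ← hcover, hcard]
  have hone : ∀ i, 1 ≤ (h i).card := by
    intro i
    rw [Nat.one_le_iff_ne_zero, Ne, Finset.card_eq_zero, ← Finset.not_nonempty_iff_eq_empty,
      not_not]
    rcases hdom (.gar i) with hin | ⟨y, hy, hadj⟩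
    · exact ⟨_, Finset.mem_filter.2 ⟨hin, show inPart P i (.gar i) from rfl⟩⟩
    · obtain ⟨v, hv, rfl⟩ := (adj_gar G P i y).1 hadj
      exact ⟨_, Finset.mem_filter.2 ⟨hy, show inPart P i (.orig v) from hv⟩⟩
  have heach : ∀ i, (h i).card = 1 := by
    have hs : ∑ i : Fin k, (1 : ℕ) = ∑ i, (h i).card := by
      rw [hsum]; simp
    intro i
    exact ((Finset.sum_eq_sum_iff_of_le (fun i _ => hone i)).1 hs i (Finset.mem_univ i)).symm
  have hform : ∀ i, ∃ v, v ∈ P i ∧ h i = {GVseven.orig v} := by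
    intro i
    obtain ⟨x, hx⟩ := Finset.card_eq_one.1 (heach i)
    rcases hdom (.gar i) with hin | ⟨y, hy, hadj⟩
    · have hxg : (GVseven.gar i : GVseven V k) = x := by
        have : (GVseven.gar i : GVseven V k) ∈ h i :=
          Finset.mem_filter.2 ⟨hin, show inPart P i (.gar i) from rfl⟩
        simpa [hx] using this
      exfalso
      rcases hdom (.gar' i) with hin' | ⟨y, hy, hadj⟩
      · have : (GVseven.gar' i : GVseven V k) ∈ h i :=
          Finset.mem_filter.2 ⟨hin', show inPart P i (.gar' i) from rfl⟩
        rw [hx, ← hxg] at this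
        simpa using this
      · obtain ⟨v, hv, rfl⟩ := (adj_gar' G P i y).1 hadj
        have : (GVseven.orig v : GVseven V k) ∈ h i :=
          Finset.mem_filter.2 ⟨hy, show inPart P i (.orig v) from hv⟩
        rw [hx, ← hxg] at this
        simpa using this
    · obtain ⟨v, hv, rfl⟩ := (adj_gar G P i y).1 hadj
      have : (GVseven.orig v : GVseven V k) ∈ h i :=
        Finset.mem_filter.2 ⟨hy, show inPart P i (.orig v) from hv⟩
      rw [hx] at this
      exact ⟨v, hv, by rw [hx, Finset.mem_singleton.1 this]⟩
  have noGuards : ∀ x ∈ D', ∃ v, x = GVseven.orig v := by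
    intro x hx
    have hx' : x ∈ Finset.univ.biUnion h := hcover ▸ hx
    obtain ⟨i, -, hxi⟩ := Finset.mem_biUnion.1 hx'
    obtain ⟨v, -, hhv⟩ := hform i
    rw [hhv, Finset.mem_singleton] at hxi
    exact ⟨v, hxi⟩
  set D : Finset V := Finset.univ.filter (fun v => GVseven.orig v ∈ D') with hD
  have himg : D' = D.image .orig := by
    ext x
    constructor
    · intro hx
      obtain ⟨v, rfl⟩ := noGuards x hx
      exact Finset.mem_image.2 ⟨v, Finset.mem_filter.2 ⟨Finset.mem_univ v, hx⟩, rfl⟩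
    · intro hx
      obtain ⟨v, hv, rfl⟩ := Finset.mem_image.1 hx
      exact (Finset.mem_filter.1 hv).2
  have hcardD : D.card = k := by
    rw [← hcard, himg, Finset.card_image_of_injective _ orig_inj]
  refine ⟨D, himg, ?_, hcardD, ?_⟩
  · intro v
    rcases hdom (.orig v) with hin | ⟨y, hy, hadj⟩
    · exact Or.inl (Finset.mem_filter.2 ⟨Finset.mem_univ v, hin⟩)
    · obtain ⟨w, rfl⟩ := noGuards y hy
      exact Or.inr ⟨w, Finset.mem_filter.2 ⟨Finset.mem_univ w, hy⟩,
        (adj_orig_orig G P v w).1 hadj⟩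
  · intro i
    obtain ⟨v, hvP, hhv⟩ := hform i
    have hvD' : (GVseven.orig v : GVseven V k) ∈ D' := by
      have : (GVseven.orig v : GVseven V k) ∈ h i := by rw [hhv]; exact Finset.mem_singleton_self _
      exact (Finset.mem_filter.1 this).1
    refine ⟨v, ⟨Finset.mem_filter.2 ⟨Finset.mem_univ v, hvD'⟩, hvP⟩, ?_⟩
    rintro w ⟨hwD, hwP⟩
    have : (GVseven.orig w : GVseven V k) ∈ h i :=
      Finset.mem_filter.2 ⟨(Finset.mem_filter.1 hwD).2, show inPart P i (.orig w) from hwP⟩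
    rw [hhv, Finset.mem_singleton] at this
    simpa using this

/-- The image of a dominating set of `G` with a representative in each part dominates `G'`. -/
lemma validB (G : SimpleGraph V) (P : Fin k → Finset V) (D : Finset V)
    (hD : IsDomFinset G D) (hrep : ∀ i, ∃ v, v ∈ D ∧ v ∈ P i) :
    IsDomFinset (GpSeven G P) (D.image .orig) := by
  intro x
  cases x with
  | orig v =>
    rcases hD v with hin | ⟨y, hy, hadj⟩
    · exact Or.inl (Finset.mem_image.2 ⟨v, hin, rfl⟩)
    · exact Or.inr ⟨.orig y, Finset.mem_image.2 ⟨y, hy, rfl⟩, (adj_orig_orig G P v y).2 hadj⟩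
  | gar i =>
    obtain ⟨v, hvD, hvP⟩ := hrep i
    exact Or.inr ⟨.orig v, Finset.mem_image.2 ⟨v, hvD, rfl⟩, (adj_gar G P i _).2 ⟨v, hvP, rfl⟩⟩
  | gar' i =>
    obtain ⟨v, hvD, hvP⟩ := hrep i
    exact Or.inr ⟨.orig v, Finset.mem_image.2 ⟨v, hvD, rfl⟩, (adj_gar' G P i _).2 ⟨v, hvP, rfl⟩⟩

/-- A partitioned TJ-step preserves having exactly one token in each part. -/
lemma rep_step (P : Fin k → Finset V) (hP : ∀ v : V, ∃! i, v ∈ P i) (D D' : Finset V)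
    (hrep : ∀ i, ∃! v, v ∈ D ∧ v ∈ P i)
    (hstep : PTJStep (fun i => ((P i : Set V))) D D') :
    ∀ i, ∃! v, v ∈ D' ∧ v ∈ P i := by
  obtain ⟨u, hu, w, hw, ⟨j, hujS, hwjS⟩, rfl⟩ := hstep
  have huj : u ∈ P j := by simpa using hujS
  have hwj : w ∈ P j := by simpa using hwjS
  intro i
  by_cases hij : i = j
  · subst hij
    refine ⟨w, ⟨Finset.mem_insert_self _ _, hwj⟩, ?_⟩
    rintro v ⟨hvD, hvP⟩
    rcases Finset.mem_insert.1 hvD with rfl | hv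
    · rfl
    · have : v = u := (hrep i).unique ⟨Finset.mem_of_mem_erase hv, hvP⟩ ⟨hu, huj⟩
      exact absurd (this ▸ hv) (Finset.notMem_erase u D)
  · obtain ⟨v, ⟨hvD, hvP⟩, hvu⟩ := hrep i
    have hvne : v ≠ u := fun h => hij ((hP u).unique (h ▸ hvP) huj)
    refine ⟨v, ⟨Finset.mem_insert_of_mem (Finset.mem_erase.2 ⟨hvne, hvD⟩), hvP⟩, ?_⟩
    rintro x ⟨hxD, hxP⟩
    rcases Finset.mem_insert.1 hxD with rfl | hx
    · exact absurd ((hP x).unique hxP hwj) hij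
    · exact hvu x ⟨Finset.mem_of_mem_erase hx, hxP⟩

end Aux

/-- `G` admits a partitioned TJ-reconfiguration sequence (w.r.t. `P_1,…,P_k`) of
dominating sets of size `k` of length `ℓ` from `D_init` to `D_fin` iff `G'` admits an
(unpartitioned) TJ-reconfiguration sequence of dominating sets of size `k` of length `ℓ`
from `D_init` to `D_fin`. -/
theorem stmt7 {V : Type*} [Fintype V] [DecidableEq V] (G : SimpleGraph V) (k : ℕ)
    (P : Fin k → Finset V) (hP : ∀ v : V, ∃! i, v ∈ P i)
    (Dinit Dfin : Finset V)
    (hDinit : IsDomFinset G Dinit) (hDfin : IsDomFinset G Dfin)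
    (hoi : ∀ i, ∃! v, v ∈ Dinit ∧ v ∈ P i) (hof : ∀ i, ∃! v, v ∈ Dfin ∧ v ∈ P i)
    (ℓ : ℕ) :
    AdmitsSeq (fun D => IsDomFinset G D ∧ D.card = k) (PTJStep (fun i => (P i : Set V)))
      Dinit Dfin ℓ ↔
    AdmitsSeq (fun D => IsDomFinset (GpSeven G P) D ∧ D.card = k) TJStep
      (Dinit.image GVseven.orig) (Dfin.image GVseven.orig) ℓ := by
  classical
  constructor
  · rintro ⟨f, h0, hl, hval, hstep⟩
    have hrepAll : ∀ n, n ≤ ℓ → ∀ i, ∃! v, v ∈ f n ∧ v ∈ P i := by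
      intro n
      induction n with
      | zero => intro _; rw [h0]; exact hoi
      | succ m ih =>
        intro hm
        exact rep_step P hP (f m) (f (m + 1)) (ih (Nat.le_of_succ_le hm))
          (hstep m (Nat.lt_of_succ_le hm))
    refine ⟨fun n => (f n).image .orig, by simp only [h0], by simp only [hl], ?_, ?_⟩
    · intro n hn
      refine ⟨validB G P (f n) (hval n hn).1 (fun i => (hrepAll n hn i).exists), ?_⟩
      rw [Finset.card_image_of_injective _ orig_inj]
      exact (hval n hn).2
    · intro n hn
      obtain ⟨u, hu, w, hw, -, heq⟩ := hstep n hn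
      refine ⟨.orig u, Finset.mem_image.2 ⟨u, hu, rfl⟩, .orig w, ?_, ?_⟩
      · intro hc
        obtain ⟨w', hw', hww'⟩ := Finset.mem_image.1 hc
        exact hw ((orig_inj hww') ▸ hw')
      · show Finset.image GVseven.orig (f (n + 1)) = _
        rw [heq, Finset.image_insert, Finset.image_erase orig_inj]
  · rintro ⟨g, h0, hl, hval, hstep⟩
    set f : ℕ → Finset V := fun n => Finset.univ.filter (fun v => GVseven.orig v ∈ g n) with hf
    have hf_eq : ∀ {n} {D : Finset V}, g n = D.image .orig → f n = D := by
      intro n D hD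
      ext v
      simp [hf, hD, orig_inj.eq_iff]
    have key : ∀ n, n ≤ ℓ → g n = (f n).image .orig ∧ IsDomFinset G (f n) ∧
        (f n).card = k ∧ (∀ i, ∃! v, v ∈ f n ∧ v ∈ P i) := by
      intro n hn
      obtain ⟨D, hDimg, hDdom, hDcard, hDrep⟩ :=
        structA G P hP (g n) (hval n hn).1 (hval n hn).2
      have := hf_eq hDimg
      rw [this]
      exact ⟨hDimg, hDdom, hDcard, hDrep⟩
    refine ⟨f, hf_eq h0, hf_eq hl, fun n hn => ⟨(key n hn).2.1, (key n hn).2.2.1⟩, ?_⟩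
    intro n hn
    obtain ⟨gn, -, -, hrepn⟩ := key n (Nat.le_of_lt hn)
    obtain ⟨gn1, -, -, hrepn1⟩ := key (n + 1) hn
    obtain ⟨u', hu', w', hw', heq⟩ := hstep n hn
    obtain ⟨u, hu, rfl⟩ := Finset.mem_image.1 (gn ▸ hu')
    have hw'mem : w' ∈ g (n + 1) := heq ▸ Finset.mem_insert_self _ _
    obtain ⟨w, hwn1, rfl⟩ := Finset.mem_image.1 (gn1 ▸ hw'mem)
    have hwfn : w ∉ f n := fun hc => hw' (gn ▸ Finset.mem_image.2 ⟨w, hc, rfl⟩)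
    have hfn1 : f (n + 1) = insert w ((f n).erase u) := by
      apply Finset.image_injective orig_inj
      rw [← gn1, heq, gn, Finset.image_insert, Finset.image_erase orig_inj]
    obtain ⟨i, hui, -⟩ := hP u
    obtain ⟨j, hwj, -⟩ := hP w
    have hij : j = i := by
      by_contra hij
      obtain ⟨v, ⟨hvD, hvP⟩, -⟩ := hrepn1 i
      rw [hfn1] at hvD
      rcases Finset.mem_insert.1 hvD with rfl | hv
      · exact hij ((hP v).unique hwj hvP)
      · have : v = u := (hrepn i).unique ⟨Finset.mem_of_mem_erase hv, hvP⟩ ⟨hu, hui⟩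
        exact Finset.notMem_erase u (f n) (this ▸ hv)
    exact ⟨u, hu, w, hwfn, ⟨i, by simpa using hui, by simpa using hij ▸ hwj⟩, hfn1⟩
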